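/- arXiv:2103.14059 — 2 statements merged into one kernel-verified Lean document; each statement's English description precedes it below -/
import Mathlib

section
/- Let k : [0,1] → ℝ be continuous, positive on (0,1], with k(0)=0, and suppose there exists M₁ ∈ (0,1) such that x·k'(x) ≤ M₁·k(x) for a.e. x ∈ [0,1]. Then the function p(x) = ∫₀ˣ y/k(y) dy is well-defined and finite for every x ∈ [0,1], i.e., y/k(y) is integrable on (0,1). -/
/-!
The condition `x k' ≤ M₁ k` says exactly that `x ↦ k x * x ^ (-M₁)` is antitone on `(0, 1]`,
since its derivative is `(x k' - M₁ k) x ^ (-M₁ - 1)`; as `k'` is integrable this follows from the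
fundamental theorem of calculus even though the inequality only holds almost everywhere.
Hence `k y ≥ k 1 * y ^ M₁`, so `y / k y ≤ y ^ (1 - M₁) / k 1`, which is integrable near `0`
because `1 - M₁ > -1`.
-/

open MeasureTheory Real Set

theorem le_of_hasDerivAt_of_ae_deriv_nonpos {f f' : ℝ → ℝ} {a b : ℝ} (hab : a ≤ b)
    (hf : ContinuousOn f (Icc a b)) (hderiv : ∀ x ∈ Ioo a b, HasDerivAt f (f' x) x)
    (hint : IntervalIntegrable f' volume a b) (hnonpos : ∀ᵐ x, x ∈ Ioc a b → f' x ≤ 0) :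
    f b ≤ f a := by
  rw [← sub_nonpos, ← intervalIntegral.integral_eq_sub_of_hasDerivAt_of_le hab hf hderiv hint,
    intervalIntegral.integral_of_le hab]
  exact setIntegral_nonpos_ae measurableSet_Ioc hnonpos

theorem hasDerivAt_mul_rpow_neg {k : ℝ → ℝ} {k'x x : ℝ} (M : ℝ) (hx : 0 < x)
    (hk : HasDerivAt k k'x x) :
    HasDerivAt (fun y => k y * y ^ (-M)) ((x * k'x - M * k x) * x ^ (-M - 1)) x := by
  refine (hk.mul (hasDerivAt_rpow_const (p := -M) (Or.inl hx.ne'))).congr_deriv ?_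
  rw [rpow_sub_one hx.ne']
  field_simp
  ring

theorem mul_rpow_neg_le_of_mul_deriv_le {k k' : ℝ → ℝ} {a b M : ℝ} (ha : 0 < a) (hab : a ≤ b)
    (hcont : ContinuousOn k (Icc a b)) (hderiv : ∀ x ∈ Ioo a b, HasDerivAt k (k' x) x)
    (hk' : IntegrableOn k' (Icc a b)) (hineq : ∀ᵐ x, x ∈ Ioc a b → x * k' x ≤ M * k x) :
    k b * b ^ (-M) ≤ k a * a ^ (-M) := by
  have hpos : ∀ x ∈ Icc a b, 0 < x := fun x hx => ha.trans_le hx.1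
  have hrpow (p : ℝ) : ContinuousOn (fun x : ℝ => x ^ p) (uIcc a b) := by
    rw [uIcc_of_le hab]
    exact continuousOn_id.rpow_const fun x hx => Or.inl (hpos x hx).ne'
  have hcont' : ContinuousOn k (uIcc a b) := by rwa [uIcc_of_le hab]
  have hint : IntervalIntegrable (fun x => (x * k' x - M * k x) * x ^ (-M - 1)) volume a b := by
    refine IntervalIntegrable.mul_continuousOn (.sub ?_ ?_) (hrpow _)
    · exact ((intervalIntegrable_iff_integrableOn_Icc_of_le hab).2 hk').continuousOn_mul
        (hrpow 1 |>.congr fun x _ => (rpow_one x).symm)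
    · exact (continuousOn_const.mul hcont').intervalIntegrable
  refine le_of_hasDerivAt_of_ae_deriv_nonpos hab
    (hcont.mul ((hrpow _).mono (uIcc_of_le hab).symm.le))
    (fun x hx => hasDerivAt_mul_rpow_neg M (hpos x (Ioo_subset_Icc_self hx)) (hderiv x hx))
    hint ?_
  filter_upwards [hineq] with x hx hmem
  exact mul_nonpos_of_nonpos_of_nonneg (sub_nonpos.2 (hx hmem))
    (rpow_nonneg (hpos x (Ioc_subset_Icc_self hmem)).le _)

theorem integrableOn_div_of_mul_rpow_le {k : ℝ → ℝ} {c M t : ℝ} (hc : 0 < c) (hM : M < 2)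
    (ht : 0 < t) (hk : ContinuousOn k (Ioo 0 t)) (hlow : ∀ y ∈ Ioo 0 t, c * y ^ M ≤ k y) :
    IntegrableOn (fun y => y / k y) (Ioo 0 t) := by
  have hkpos : ∀ y ∈ Ioo 0 t, 0 < k y := fun y hy =>
    (mul_pos hc (rpow_pos_of_pos hy.1 M)).trans_le (hlow y hy)
  have hmajorant : IntegrableOn (fun y => c⁻¹ * y ^ (1 - M)) (Ioo 0 t) :=
    ((intervalIntegral.integrableOn_Ioo_rpow_iff ht).2 (by linarith)).const_mul c⁻¹
  refine hmajorant.mono' ?_ ?_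
  · exact (continuousOn_id.div hk fun y hy => (hkpos y hy).ne').aestronglyMeasurable
      measurableSet_Ioo
  · filter_upwards [ae_restrict_mem measurableSet_Ioo] with y hy
    rw [norm_of_nonneg (div_nonneg hy.1.le (hkpos y hy).le)]
    calc y / k y ≤ y / (c * y ^ M) :=
          div_le_div_of_nonneg_left hy.1.le (mul_pos hc (rpow_pos_of_pos hy.1 M)) (hlow y hy)
      _ = c⁻¹ * y ^ (1 - M) := by
          rw [rpow_sub hy.1, rpow_one]
          field_simp

theorem stmt1_general (k k' : ℝ → ℝ) (M₁ : ℝ) (hM : M₁ ∈ Set.Ioo (0 : ℝ) 1)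
    (hcont : ContinuousOn k (Set.Icc 0 1))
    (hpos : ∀ x ∈ Set.Ioc (0 : ℝ) 1, 0 < k x)
    (hderiv : ∀ x ∈ Set.Ioo (0 : ℝ) 1, HasDerivAt k (k' x) x)
    (hW11 : IntegrableOn k' (Set.Icc 0 1))
    (hineq : ∀ᵐ x, x ∈ Set.Icc (0 : ℝ) 1 → x * k' x ≤ M₁ * k x) :
    IntegrableOn (fun y => y / k y) (Set.Ioo 0 1) := by
  have hlow : ∀ y ∈ Ioo (0 : ℝ) 1, k 1 * y ^ M₁ ≤ k y := by
    intro y ⟨hy0, hy1⟩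
    have hsub : Icc y 1 ⊆ Icc 0 1 := Icc_subset_Icc_left hy0.le
    have hmono := mul_rpow_neg_le_of_mul_deriv_le hy0 hy1.le (hcont.mono hsub)
      (fun x hx => hderiv x ⟨hy0.trans hx.1, hx.2⟩) (hW11.mono_set hsub)
      (hineq.mono fun x hx hmem => hx (hsub (Ioc_subset_Icc_self hmem)))
    rw [one_rpow, mul_one] at hmono
    calc k 1 * y ^ M₁ ≤ k y * y ^ (-M₁) * y ^ M₁ := by gcongr
      _ = k y := by rw [mul_assoc, ← rpow_add hy0, neg_add_cancel, rpow_zero, mul_one]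
  exact integrableOn_div_of_mul_rpow_le (hpos 1 ⟨one_pos, le_rfl⟩) (by linarith [hM.2]) one_pos
    (hcont.mono Ioo_subset_Icc_self) hlow

/-- For `k` weakly degenerate at 0 with `M₁ ∈ (0,1)`, the function `y ↦ y / k y`
is integrable on `(0,1)`, so `p(x) = ∫₀ˣ y / k y dy` is well defined and finite. -/
theorem stmt1 (k k' : ℝ → ℝ) (M₁ : ℝ) (hM : M₁ ∈ Set.Ioo (0 : ℝ) 1)
    (hcont : ContinuousOn k (Set.Icc 0 1))
    (hpos : ∀ x ∈ Set.Ioc (0 : ℝ) 1, 0 < k x)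
    (hk0 : k 0 = 0)
    (hderiv : ∀ x ∈ Set.Ioo (0 : ℝ) 1, HasDerivAt k (k' x) x)
    (hW11 : IntegrableOn k' (Set.Icc 0 1))
    (hineq : ∀ᵐ x, x ∈ Set.Icc (0 : ℝ) 1 → x * k' x ≤ M₁ * k x) :
    IntegrableOn (fun y => y / k y) (Set.Ioo 0 1) :=
  stmt1_general k k' M₁ hM hcont hpos hderiv hW11 hineq
end

section
/- (Pointwise bound for the barred weight) Let k satisfy k ∈ C⁰([0,1]) ∩ C¹([0,1)), k(1)=0, k>0 on [0,1), and (x−1)k'(x) ≤ M₂k(x) a.e. with M₂ ∈ (0,1). Then p̄(x) = ∫₀ˣ (y−1)/k(y) dy is well-defined and finite for every x ∈ [0,1] (the integrand (y−1)/k(y) is integrable on (0,1)), p̄ is nonincreasing, and ψ̄(x) = p̄(x) − 2‖p̄‖_∞ satisfies ψ̄ < 0 on [0,1]. -/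
/-!
The growth condition says that `k x * (1 - x) ^ (-M₂)` has an almost everywhere nonnegative
derivative. A function that is differentiable everywhere with a.e. nonnegative derivative is
monotone: by the Sard-type estimates for the Jacobian, the image of the set where `f' ≤ 0` is null,
so if `f b < f a` some value `c ∈ (f b, f a)` is not taken there; but the last point of `[a, b]`
where `f = c` is a one-sided local maximum, so `f' ≤ 0` at it. Hence `k y ≥ k 0 * (1 - y) ^ M₂`, so
`|(y - 1) / k y| ≤ (1 - y) ^ (1 - M₂) / k 0` is integrable. Then `p̄` is the primitive of a
nonpositive function, hence nonincreasing, and `p̄ 1 < 0` forces `sup |p̄| > 0`, whence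
`ψ̄ ≤ -sup |p̄| < 0`.
-/

open MeasureTheory Real Set intervalIntegral

theorem volume_image_setOf_deriv_nonpos_eq_zero {f f' : ℝ → ℝ} {s : Set ℝ}
    (hf : ∀ x ∈ s, HasDerivAt f (f' x) x) (h : ∀ᵐ x, x ∈ s → 0 ≤ f' x) :
    volume (f '' {x ∈ s | f' x ≤ 0}) = 0 := by
  have hsplit : {x ∈ s | f' x ≤ 0} = {x ∈ s | f' x = 0} ∪ {x ∈ s | f' x < 0} := by
    ext x; simp only [mem_ofPred_eq, mem_union, le_iff_eq_or_lt]; tauto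
  rw [hsplit, image_union]
  refine measure_union_null ?_ ?_
  · exact addHaar_image_eq_zero_of_det_fderivWithin_eq_zero volume
      (fun x hx => (hf x hx.1).hasFDerivAt.hasFDerivWithinAt) (fun x hx => by simp [hx.2])
  · refine addHaar_image_eq_zero_of_differentiableOn_of_addHaar_eq_zero volume
      (fun x hx => (hf x hx.1).differentiableAt.differentiableWithinAt) ?_
    refine measure_mono_null ?_ (ae_iff.1 h)
    exact fun x hx hx' => (hx' hx.1).not_gt hx.2

theorem le_of_hasDerivAt_of_ae_nonneg {f f' : ℝ → ℝ} {a b : ℝ} (hab : a ≤ b)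
    (hcont : ContinuousOn f (Icc a b)) (hf : ∀ x ∈ Ioo a b, HasDerivAt f (f' x) x)
    (h : ∀ᵐ x, x ∈ Ioo a b → 0 ≤ f' x) : f a ≤ f b := by
  by_contra! hlt
  obtain ⟨c, hc, hcP⟩ : ∃ c ∈ Ioo (f b) (f a), c ∉ f '' {x ∈ Ioo a b | f' x ≤ 0} := by
    by_contra! hsub
    have := measure_mono_null hsub (volume_image_setOf_deriv_nonpos_eq_zero hf h)
    simp [Real.volume_Ioo] at this
    linarith
  set S := Icc a b ∩ f ⁻¹' Ici c
  have hS : IsCompact S := isCompact_Icc.of_isClosed_subset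
    (hcont.preimage_isClosed_of_isClosed isClosed_Icc isClosed_Ici) inter_subset_left
  obtain ⟨t, ⟨htI, hct⟩, htmax⟩ := hS.exists_isGreatest ⟨a, left_mem_Icc.2 hab, hc.2.le⟩
  have hft : f t = c := by
    refine le_antisymm ?_ hct
    by_contra! hgt
    obtain ⟨u, hu, hfu⟩ := intermediate_value_Icc' (htI.2)
      (hcont.mono (Icc_subset_Icc htI.1 le_rfl)) ⟨hc.1.le, hgt.le⟩
    have := htmax ⟨⟨htI.1.trans hu.1, hu.2⟩, hfu.ge⟩
    exact hgt.ne (by rw [← hfu, le_antisymm this hu.1])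
  have htb : t < b := htI.2.lt_of_ne (by rintro rfl; exact hc.1.ne' hft.symm)
  have hta : a < t := htI.1.lt_of_ne (by rintro rfl; exact hc.2.ne hft.symm)
  have hmax : IsLocalMaxOn f (Icc t b) t := by
    refine IsMaxOn.localize (isMaxOn_iff.2 fun u hu => ?_)
    by_contra! hlt'
    have hut : u ≤ t := htmax ⟨⟨htI.1.trans hu.1, hu.2⟩, (hft ▸ hlt'.le : c ≤ f u)⟩
    exact hlt'.ne (by rw [le_antisymm hut hu.1])
  have hderiv : f' t ≤ 0 := by
    have := hmax.hasFDerivWithinAt_nonpos (hf t ⟨hta, htb⟩).hasFDerivAt.hasFDerivWithinAt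
      (sub_mem_posTangentConeAt_of_segment_subset (segment_eq_Icc htb.le).subset)
    simp only [map_sub, ContinuousLinearMap.toSpanSingleton_apply, smul_eq_mul] at this
    nlinarith
  exact hcP ⟨t, ⟨⟨hta, htb⟩, hderiv⟩, hft⟩

theorem monotoneOn_of_hasDerivAt_of_ae_nonneg {f f' : ℝ → ℝ} {D : Set ℝ} (hD : Convex ℝ D)
    (hcont : ContinuousOn f D) (hf : ∀ x ∈ interior D, HasDerivAt f (f' x) x)
    (h : ∀ᵐ x, x ∈ interior D → 0 ≤ f' x) : MonotoneOn f D := by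
  intro x hx y hy hxy
  have hsub : Icc x y ⊆ D := hD.ordConnected.out hx hy
  have hint : Ioo x y ⊆ interior D := by simpa using interior_mono hsub
  exact le_of_hasDerivAt_of_ae_nonneg hxy (hcont.mono hsub) (fun t ht => hf t (hint ht))
    (h.mono fun t ht ht' => ht (hint ht'))

theorem monotoneOn_mul_rpow_neg_of_ae_sub_mul_deriv_le {k k' : ℝ → ℝ} {a b M : ℝ}
    (hc : ContinuousOn k (Ico a b)) (hd : ∀ x ∈ Ioo a b, HasDerivAt k (k' x) x)
    (hineq : ∀ᵐ x, x ∈ Ioo a b → (x - b) * k' x ≤ M * k x) :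
    MonotoneOn (fun x => k x * (b - x) ^ (-M)) (Ico a b) := by
  refine monotoneOn_of_hasDerivAt_of_ae_nonneg (convex_Ico a b)
    (f' := fun x => k' x * (b - x) ^ (-M) + k x * (M * (b - x) ^ (-M - 1))) ?_ ?_ ?_
  · exact hc.mul <| (continuousOn_const.sub continuousOn_id).rpow_const
      fun x hx => Or.inl (sub_pos.2 hx.2).ne'
  · rw [interior_Ico]
    intro x hx
    have hpow : HasDerivAt (fun y => (b - y) ^ (-M)) (M * (b - x) ^ (-M - 1)) x := by
      convert ((hasDerivAt_id' x).const_sub b).rpow_const (p := -M)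
        (Or.inl (sub_pos.2 hx.2).ne') using 1
      ring
    exact (hd x hx).mul hpow
  · rw [interior_Ico]
    filter_upwards [hineq] with x hx hxI
    have hbx : 0 < b - x := sub_pos.2 hxI.2
    have hsplit : (b - x) ^ (-M) = (b - x) ^ (-M - 1) * (b - x) := by
      rw [← rpow_add_one hbx.ne']; ring_nf
    have hfactor : k' x * (b - x) ^ (-M) + k x * (M * (b - x) ^ (-M - 1))
        = (b - x) ^ (-M - 1) * (M * k x - (x - b) * k' x) := by
      rw [hsplit]; ring
    rw [hfactor]
    exact mul_nonneg (rpow_nonneg hbx.le _) (sub_nonneg.2 (hx hxI))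

theorem mul_rpow_le_of_ae_sub_mul_deriv_le {k k' : ℝ → ℝ} {a b M : ℝ}
    (hc : ContinuousOn k (Ico a b)) (hd : ∀ x ∈ Ioo a b, HasDerivAt k (k' x) x)
    (hineq : ∀ᵐ x, x ∈ Ioo a b → (x - b) * k' x ≤ M * k x) {x : ℝ} (hx : x ∈ Ico a b) :
    k a * (b - x) ^ M ≤ k x * (b - a) ^ M := by
  have hab : a < b := hx.1.trans_lt hx.2
  have hmono := monotoneOn_mul_rpow_neg_of_ae_sub_mul_deriv_le hc hd hineq
    (left_mem_Ico.2 hab) hx hx.1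
  have hpos : 0 < (b - a) ^ M * (b - x) ^ M :=
    mul_pos (rpow_pos_of_pos (sub_pos.2 hab) _) (rpow_pos_of_pos (sub_pos.2 hx.2) _)
  have hcancel : ∀ y : ℝ, 0 < y → y ^ (-M) * y ^ M = 1 := fun y hy => by
    rw [← rpow_add hy, neg_add_cancel, rpow_zero]
  calc k a * (b - x) ^ M
      = k a * (b - a) ^ (-M) * ((b - a) ^ M * (b - x) ^ M) := by
        linear_combination (-(k a * (b - x) ^ M)) * hcancel _ (sub_pos.2 hab)
    _ ≤ k x * (b - x) ^ (-M) * ((b - a) ^ M * (b - x) ^ M) :=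
        mul_le_mul_of_nonneg_right hmono hpos.le
    _ = k x * (b - a) ^ M := by
        linear_combination (k x * (b - a) ^ M) * hcancel _ (sub_pos.2 hx.2)

theorem integrableOn_sub_div_of_mul_rpow_le {k : ℝ → ℝ} {a b c M : ℝ} (hM : M < 2) (hc : 0 < c)
    (hk : ContinuousOn k (Ioo a b)) (hlow : ∀ y ∈ Ioo a b, c * (b - y) ^ M ≤ k y) :
    IntegrableOn (fun y => (y - b) / k y) (Ioo a b) := by
  have hbound : IntegrableOn (fun y => (b - y) ^ (1 - M) / c) (Ioo a b) := by
    have := ((intervalIntegrable_rpow' (r := 1 - M) (by linarith)).comp_sub_left b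
      (a := b - a) (b := 0)).div_const c
    simp only [sub_sub_cancel, sub_zero] at this
    exact this.1.mono_set Ioo_subset_Ioc_self
  have hlow_pos : ∀ y ∈ Ioo a b, 0 < c * (b - y) ^ M :=
    fun y hy => mul_pos hc (rpow_pos_of_pos (sub_pos.2 hy.2) _)
  refine hbound.mono' ?_ (ae_restrict_of_forall_mem measurableSet_Ioo fun y hy => ?_)
  · refine ContinuousOn.aestronglyMeasurable ?_ measurableSet_Ioo
    exact (continuousOn_id.sub continuousOn_const).div hk
      fun y hy => ((hlow_pos y hy).trans_le (hlow y hy)).ne'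
  · have hby : 0 < b - y := sub_pos.2 hy.2
    calc ‖(y - b) / k y‖ = (b - y) / k y := by
          rw [norm_div, Real.norm_of_nonpos (by linarith), neg_sub,
            Real.norm_of_nonneg ((hlow_pos y hy).trans_le (hlow y hy)).le]
      _ ≤ (b - y) / (c * (b - y) ^ M) :=
          div_le_div_of_nonneg_left hby.le (hlow_pos y hy) (hlow y hy)
      _ = (b - y) ^ (1 - M) / c := by
          rw [rpow_sub hby, rpow_one]
          field_simp

theorem antitoneOn_primitive_of_nonpos {f : ℝ → ℝ} {a b : ℝ} (hf : IntegrableOn f (Icc a b))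
    (hneg : ∀ x ∈ Icc a b, f x ≤ 0) : AntitoneOn (fun x => ∫ t in a..x, f t) (Icc a b) := by
  intro x hx y hy hxy
  have hint : ∀ u v, u ∈ Icc a b → v ∈ Icc a b → IntervalIntegrable f volume u v :=
    fun u v hu hv => (hf.mono_set (uIcc_subset_Icc hu hv)).intervalIntegrable
  simp only
  rw [← integral_add_adjacent_intervals (hint a x (left_mem_Icc.2 (hx.1.trans hx.2)) hx)
    (hint x y hx hy), add_le_iff_nonpos_right, integral_of_le hxy]
  exact setIntegral_nonpos measurableSet_Ioc
    fun t ht => hneg t ⟨hx.1.trans ht.1.le, ht.2.trans hy.2⟩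

theorem integral_sub_div_neg {k : ℝ → ℝ} {a b : ℝ} (hab : a < b)
    (hint : IntegrableOn (fun y => (y - b) / k y) (Ioo a b)) (hpos : ∀ y ∈ Ioo a b, 0 < k y) :
    ∫ y in a..b, (y - b) / k y < 0 := by
  have := intervalIntegral_pos_of_pos_on
    ((intervalIntegrable_iff_integrableOn_Ioo_of_le hab.le).2 hint).neg
    (fun y hy => neg_pos.2 (div_neg_of_neg_of_pos (sub_neg.2 hy.2) (hpos y hy))) hab
  rw [Pi.neg_def, intervalIntegral.integral_neg] at this
  exact neg_pos.1 this

theorem sub_two_mul_sSup_abs_image_neg {p : ℝ → ℝ} {s : Set ℝ}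
    (hbdd : BddAbove ((fun x => |p x|) '' s)) {x₀ : ℝ} (hx₀ : x₀ ∈ s) (hp₀ : p x₀ ≠ 0)
    {x : ℝ} (hx : x ∈ s) : p x - 2 * sSup ((fun x => |p x|) '' s) < 0 := by
  have hx₀M := le_csSup hbdd (mem_image_of_mem _ hx₀)
  have hxM := le_csSup hbdd (mem_image_of_mem _ hx)
  have := abs_pos.2 hp₀
  linarith [le_abs_self (p x)]

theorem stmt17_general (k k' : ℝ → ℝ) (M₂ : ℝ) (hM : M₂ ∈ Set.Ioo (0 : ℝ) 1)
    (hc : ContinuousOn k (Set.Icc 0 1))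
    (hpos : ∀ x ∈ Set.Ico (0 : ℝ) 1, 0 < k x)
    (hd : ∀ x ∈ Set.Ioo (0 : ℝ) 1, HasDerivAt k (k' x) x)
    (hineq : ∀ᵐ x, x ∈ Set.Icc (0 : ℝ) 1 → (x - 1) * k' x ≤ M₂ * k x)
    (pbar ψbar : ℝ → ℝ) (M : ℝ)
    (hp : ∀ x, pbar x = ∫ y in (0 : ℝ)..x, (y - 1) / k y)
    (hM2 : M = sSup ((fun x => |pbar x|) '' Set.Icc 0 1))
    (hψ : ∀ x, ψbar x = pbar x - 2 * M) :
    IntegrableOn (fun y => (y - 1) / k y) (Set.Ioo 0 1) ∧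
      AntitoneOn pbar (Set.Icc 0 1) ∧
      ∀ x ∈ Set.Icc (0 : ℝ) 1, ψbar x < 0 := by
  obtain rfl : pbar = fun x => ∫ y in (0 : ℝ)..x, (y - 1) / k y := funext hp
  have hlow : ∀ y ∈ Ioo (0 : ℝ) 1, k 0 * (1 - y) ^ M₂ ≤ k y := fun y hy => by
    simpa using mul_rpow_le_of_ae_sub_mul_deriv_le (hc.mono Ico_subset_Icc_self) hd
      (hineq.mono fun x hx hxI => hx (Ioo_subset_Icc_self hxI)) (Ioo_subset_Ico_self hy)
  have hint : IntegrableOn (fun y => (y - 1) / k y) (Ioo 0 1) :=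
    integrableOn_sub_div_of_mul_rpow_le (by linarith [hM.2]) (hpos 0 ⟨le_rfl, one_pos⟩)
      (hc.mono Ioo_subset_Icc_self) hlow
  have hint' : IntegrableOn (fun y => (y - 1) / k y) (Icc 0 1) := by
    rwa [integrableOn_Icc_iff_integrableOn_Ioo]
  have hnonpos : ∀ y ∈ Icc (0 : ℝ) 1, (y - 1) / k y ≤ 0 := fun y hy => by
    rcases hy.2.lt_or_eq with hy1 | rfl
    · exact div_nonpos_of_nonpos_of_nonneg (by linarith) (hpos y ⟨hy.1, hy1⟩).le
    · simp
  have hp1 : ∫ y in (0 : ℝ)..1, (y - 1) / k y < 0 :=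
    integral_sub_div_neg one_pos hint fun y hy => hpos y (Ioo_subset_Ico_self hy)
  have hcont : ContinuousOn (fun x => ∫ y in (0 : ℝ)..x, (y - 1) / k y) (Icc 0 1) := by
    rw [← uIcc_of_le zero_le_one] at hint' ⊢
    exact continuousOn_primitive_interval hint'
  have hbdd := isCompact_Icc.bddAbove_image hcont.abs
  refine ⟨hint, antitoneOn_primitive_of_nonpos hint' hnonpos, fun x hx => ?_⟩
  rw [hψ, hM2]
  exact sub_two_mul_sSup_abs_image_neg hbdd (right_mem_Icc.2 zero_le_one) hp1.ne hx

/-- For `k` weakly degenerate at `1` with `M₂ ∈ (0,1)`: `(y-1)/k(y)` is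
integrable on `(0,1)`, `p̄(x) = ∫₀ˣ (y-1)/k(y) dy` is nonincreasing, and
`ψ̄ = p̄ - 2‖p̄‖_∞ < 0` on `[0,1]`. -/
theorem stmt17 (k k' : ℝ → ℝ) (M₂ : ℝ) (hM : M₂ ∈ Set.Ioo (0 : ℝ) 1)
    (hc : ContinuousOn k (Set.Icc 0 1))
    (hpos : ∀ x ∈ Set.Ico (0 : ℝ) 1, 0 < k x) (hk1 : k 1 = 0)
    (hd : ∀ x ∈ Set.Ioo (0 : ℝ) 1, HasDerivAt k (k' x) x)
    (hineq : ∀ᵐ x, x ∈ Set.Icc (0 : ℝ) 1 → (x - 1) * k' x ≤ M₂ * k x)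
    (pbar ψbar : ℝ → ℝ) (M : ℝ)
    (hp : ∀ x, pbar x = ∫ y in (0 : ℝ)..x, (y - 1) / k y)
    (hM2 : M = sSup ((fun x => |pbar x|) '' Set.Icc 0 1))
    (hψ : ∀ x, ψbar x = pbar x - 2 * M) :
    IntegrableOn (fun y => (y - 1) / k y) (Set.Ioo 0 1) ∧
      AntitoneOn pbar (Set.Icc 0 1) ∧
      ∀ x ∈ Set.Icc (0 : ℝ) 1, ψbar x < 0 :=
  stmt17_general k k' M₂ hM hc hpos hd hineq pbar ψbar M hp hM2 hψ
end
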